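/- arXiv:1501.00754 — 2 statements merged into one kernel-verified Lean document; each statement's English description precedes it below -/
import Mathlib

section
/- Suppose in addition that h ∈ g and scalars λ_1,…,λ_n satisfy [h,b_j] = λ_j b_j and [h,b̄_j] = −λ_j b̄_j for all j. With u := ι(b̄_1)···ι(b̄_n), ρ := (1/2) Σ_{j=1}^n [b_j,b̄_j] and w := u·ι(h), one has (1/4)(Θ·w + (−1)^n w·Θ) = (1/2)(ι(ρ)·w + (−1)^{n+1} w·ι(ρ)) in Cl(g,κ). -/
/-!
Write `S = 6Θ`, `σ = Σ_j [b_j, b̄_j] = 2ρ` and `A(x) = Σ_{j,k} κ(x, [e_j, e_k]) ι(e^j) ι(e^k)`.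
Anticommuting `ι(x)` through the three factors of each term of `S` and contracting against the
dual basis gives `S ι(x) + ι(x) S = 6 A(x)`. Since `ι(b̄_k) u = 0 = u ι(b̄_k)`, only few terms of
`S` and `A(h)` survive next to `u`, and because `l̄` is an isotropic subalgebra they add up to
`S u = 6 ι(σ) u` and `u A(h) = -2 κ(h, σ) u` (the latter as `κ(h, [l̄, l̄]) = 0`). The reversal
anti-automorphism negates `S` and `A(h)`, which turns the left-handed identities into the
right-handed `u S = -6 u ι(σ)`. Substituting everything into `w = u ι(h)` gives the claim.
-/

open CliffordAlgebra

section Clifford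

variable {R M : Type*} [CommRing R] [AddCommGroup M] [Module R M] (κ : LinearMap.BilinForm R M)

local notation "Q" => LinearMap.BilinMap.toQuadraticMap κ

theorem ι_mul_ι_eq_smul_one_sub (hsymm : ∀ x y, κ x y = κ y x) (x y : M) :
    ι Q x * ι Q y = (2 * κ x y) • (1 : CliffordAlgebra Q) - ι Q y * ι Q x := by
  rw [eq_sub_iff_add_eq, ι_mul_ι_add_swap, LinearMap.BilinMap.polar_toQuadraticMap, hsymm y x,
    ← two_mul, Algebra.algebraMap_eq_smul_one]

theorem ι_mul_self_eq_zero {x : M} (hx : κ x x = 0) : ι Q x * ι Q x = 0 := by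
  rw [ι_sq_scalar, LinearMap.BilinMap.toQuadraticMap_apply, hx, map_zero]

theorem ι_mul_ι_eq_neg_of_bilin_eq_zero {x y : M} (hxy : κ x y = 0) (hyx : κ y x = 0) :
    ι Q x * ι Q y = -(ι Q y * ι Q x) :=
  eq_neg_of_add_eq_zero_left <| by
    rw [ι_mul_ι_add_swap, LinearMap.BilinMap.polar_toQuadraticMap, hxy, hyx, add_zero, map_zero]

theorem ι_mul_ι_mul_ι_mul_ι_add_ι_mul (hsymm : ∀ x y, κ x y = κ y x) (a c d x : M) :
    ι Q a * ι Q c * ι Q d * ι Q x + ι Q x * (ι Q a * ι Q c * ι Q d) =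
      (2 * κ x a) • (ι Q c * ι Q d) - (2 * κ x c) • (ι Q a * ι Q d) +
        (2 * κ x d) • (ι Q a * ι Q c) := by
  have anti : ∀ y z (v : CliffordAlgebra Q),
      ι Q y * (ι Q z * v) = (2 * κ y z) • v - ι Q z * (ι Q y * v) := by
    intro y z v
    rw [← mul_assoc, ι_mul_ι_eq_smul_one_sub κ hsymm, sub_mul, smul_mul_assoc, one_mul, mul_assoc]
  simp only [mul_assoc, anti x a, anti x c, ι_mul_ι_eq_smul_one_sub κ hsymm x d, mul_sub,
    mul_smul_comm, mul_one]
  abel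

end Clifford

theorem List.mul_prod_eq_zero_of_mem {A : Type*} [Ring A] {a : A} {l : List A} (ha : a * a = 0)
    (hcomm : ∀ x ∈ l, a * x = -(x * a)) (hmem : a ∈ l) : a * l.prod = 0 := by
  induction l with
  | nil => simp at hmem
  | cons y t ih =>
    rw [List.prod_cons, ← mul_assoc]
    rcases List.mem_cons.mp hmem with rfl | ht
    · rw [ha, zero_mul]
    · rw [hcomm y List.mem_cons_self, neg_mul, mul_assoc,
        ih (fun x hx => hcomm x (List.mem_cons_of_mem _ hx)) ht, mul_zero, neg_zero]

theorem List.prod_mul_eq_zero_of_mem {A : Type*} [Ring A] {a : A} {l : List A} (ha : a * a = 0)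
    (hcomm : ∀ x ∈ l, a * x = -(x * a)) (hmem : a ∈ l) : l.prod * a = 0 := by
  induction l using List.reverseRecOn with
  | nil => simp at hmem
  | append_singleton t y ih =>
    rw [List.prod_append, List.prod_singleton, mul_assoc]
    rcases List.mem_append.mp hmem with ht | hy
    · rw [← neg_eq_iff_eq_neg.mpr (hcomm y (by simp)), mul_neg, ← mul_assoc,
        ih (fun x hx => hcomm x (by simp [hx])) ht, zero_mul, neg_zero]
    · rw [← List.mem_singleton.mp hy, ha, mul_zero]

section Cubic

variable {R g I : Type*} [CommRing R] [LieRing g] [LieAlgebra R g] [Fintype I]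
  (κ : LinearMap.BilinForm R g)

local notation "Q" => LinearMap.BilinMap.toQuadraticMap κ

theorem bilin_lie_cycle (hsymm : ∀ a b : g, κ a b = κ b a)
    (hinv : ∀ a b c : g, κ ⁅a, b⁆ c = κ a ⁅b, c⁆) (a b c : g) : κ a ⁅b, c⁆ = κ c ⁅a, b⁆ := by
  rw [← hinv, hsymm]

theorem bilin_lie_swap (hinv : ∀ a b c : g, κ ⁅a, b⁆ c = κ a ⁅b, c⁆) (a b c : g) :
    κ a ⁅b, c⁆ = -κ b ⁅a, c⁆ := by
  rw [← hinv, ← hinv, ← lie_skew, map_neg, LinearMap.neg_apply]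

theorem Module.Basis.sum_bilin_smul_eq [DecidableEq I] (B : Module.Basis I R g) (d : I → g)
    (hd : ∀ i j, κ (B i) (d j) = if i = j then 1 else 0) (y : g) :
    ∑ i, κ y (d i) • B i = y := by
  have hrepr : ∀ i, κ y (d i) = B.repr y i := by
    intro i
    conv_lhs => rw [← B.sum_repr y]
    simp only [map_sum, map_smul, LinearMap.sum_apply, LinearMap.smul_apply, hd]
    simp
  simp only [hrepr, B.sum_repr]

theorem sum_bilin_mul_bilin {B d : I → g} (hexp : ∀ y, ∑ i, κ y (d i) • B i = y) (x y : g) :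
    ∑ i, κ (B i) y * κ x (d i) = κ x y := by
  conv_rhs => rw [← hexp x]
  simp [mul_comm]

/-- Six times the cubic element `Θ`, for a basis `B` with `κ`-dual family `d`. -/
def cubicElement (B d : I → g) : CliffordAlgebra Q :=
  ∑ i, ∑ j, ∑ k, κ (B i) ⁅B j, B k⁆ • (ι Q (d i) * ι Q (d j) * ι Q (d k))

def cliffordAd (B d : I → g) (x : g) : CliffordAlgebra Q :=
  ∑ j, ∑ k, κ x ⁅B j, B k⁆ • (ι Q (d j) * ι Q (d k))

theorem cubicElement_eq_sum_ι_mul_cliffordAd (B d : I → g) :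
    cubicElement κ B d = ∑ i, ι Q (d i) * cliffordAd κ B d (B i) := by
  simp only [cubicElement, cliffordAd, Finset.mul_sum, mul_smul_comm, mul_assoc]

theorem cubicElement_mul_ι_add_ι_mul_cubicElement (hsymm : ∀ a b : g, κ a b = κ b a)
    (hinv : ∀ a b c : g, κ ⁅a, b⁆ c = κ a ⁅b, c⁆) {B d : I → g}
    (hexp : ∀ y, ∑ i, κ y (d i) • B i = y) (x : g) :
    cubicElement κ B d * ι Q x + ι Q x * cubicElement κ B d = (6 : R) • cliffordAd κ B d x := by
  have contract := sum_bilin_mul_bilin κ hexp x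
  have h₁ : ∑ i, ∑ j, ∑ k, (κ (B i) ⁅B j, B k⁆ * (2 * κ x (d i))) • (ι Q (d j) * ι Q (d k)) =
      (2 : R) • cliffordAd κ B d x := by
    rw [Finset.sum_comm, cliffordAd, Finset.smul_sum]
    refine Finset.sum_congr rfl fun j _ => ?_
    rw [Finset.sum_comm, Finset.smul_sum]
    refine Finset.sum_congr rfl fun k _ => ?_
    rw [← Finset.sum_smul, smul_smul, ← contract]
    simp only [Finset.mul_sum]
    congr 1
    exact Finset.sum_congr rfl fun i _ => by ring
  have h₂ : ∑ i, ∑ j, ∑ k, (κ (B i) ⁅B j, B k⁆ * (2 * κ x (d j))) • (ι Q (d i) * ι Q (d k)) =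
      (-2 : R) • cliffordAd κ B d x := by
    rw [cliffordAd, Finset.smul_sum]
    refine Finset.sum_congr rfl fun i _ => ?_
    rw [Finset.sum_comm, Finset.smul_sum]
    refine Finset.sum_congr rfl fun k _ => ?_
    rw [← Finset.sum_smul, smul_smul, ← contract]
    simp only [Finset.mul_sum]
    congr 1
    exact Finset.sum_congr rfl fun j _ => by rw [bilin_lie_swap κ hinv]; ring
  have h₃ : ∑ i, ∑ j, ∑ k, (κ (B i) ⁅B j, B k⁆ * (2 * κ x (d k))) • (ι Q (d i) * ι Q (d j)) =
      (2 : R) • cliffordAd κ B d x := by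
    rw [cliffordAd, Finset.smul_sum]
    refine Finset.sum_congr rfl fun i _ => ?_
    rw [Finset.smul_sum]
    refine Finset.sum_congr rfl fun j _ => ?_
    rw [← Finset.sum_smul, smul_smul, ← contract]
    simp only [Finset.mul_sum]
    congr 1
    exact Finset.sum_congr rfl fun k _ => by rw [bilin_lie_cycle κ hsymm hinv]; ring
  simp only [cubicElement, Finset.sum_mul, Finset.mul_sum, ← Finset.sum_add_distrib,
    smul_mul_assoc, mul_smul_comm, ← smul_add, ι_mul_ι_mul_ι_mul_ι_add_ι_mul κ hsymm]
  simp only [smul_add, smul_sub, smul_smul, Finset.sum_add_distrib, Finset.sum_sub_distrib]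
  rw [h₁, h₂, h₃]
  module

theorem reverse_cliffordAd (B d : I → g) (x : g) :
    reverse (cliffordAd κ B d x) = -cliffordAd κ B d x := by
  simp only [cliffordAd, map_sum, map_smul, reverse.map_mul, reverse_ι]
  rw [Finset.sum_comm, ← Finset.sum_neg_distrib]
  refine Finset.sum_congr rfl fun j _ => ?_
  rw [← Finset.sum_neg_distrib]
  refine Finset.sum_congr rfl fun k _ => ?_
  rw [← lie_skew, map_neg, neg_smul]

theorem reverse_cubicElement (hsymm : ∀ a b : g, κ a b = κ b a)
    (hinv : ∀ a b c : g, κ ⁅a, b⁆ c = κ a ⁅b, c⁆) (B d : I → g) :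
    reverse (cubicElement κ B d) = -cubicElement κ B d := by
  simp only [cubicElement, map_sum, map_smul, reverse.map_mul, reverse_ι, ← mul_assoc]
  rw [Finset.sum_comm, Finset.sum_congr rfl fun _ _ => Finset.sum_comm, Finset.sum_comm]
  simp only [← Finset.sum_neg_distrib, ← neg_smul]
  refine Finset.sum_congr rfl fun i _ => Finset.sum_congr rfl fun j _ =>
    Finset.sum_congr rfl fun k _ => ?_
  rw [bilin_lie_cycle κ hsymm hinv (B i), ← lie_skew, map_neg]

end Cubic

section Polarized

variable {R g : Type*} [CommRing R] [LieRing g] [LieAlgebra R g]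
  (κ : LinearMap.BilinForm R g) {n : ℕ} {b bb : Fin n → g}

local notation "Q" => LinearMap.BilinMap.toQuadraticMap κ

/- The basis `(b, b̄)` of `g` is `Sum.elim b bb` and its `κ`-dual basis `(b̄, b)` is
`Sum.elim bb b`. -/

theorem Module.Basis.sum_bilin_elim_smul_elim_eq (hsymm : ∀ a b : g, κ a b = κ b a)
    (B : Module.Basis (Fin n ⊕ Fin n) R g) (hb : ∀ i, b i = B (Sum.inl i))
    (hbb : ∀ i, bb i = B (Sum.inr i)) (hbiso : ∀ i j, κ (b i) (b j) = 0)
    (hbbiso : ∀ i j, κ (bb i) (bb j) = 0)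
    (hpair : ∀ i j, κ (b i) (bb j) = if i = j then (1 : R) else 0) (y : g) :
    ∑ i, κ y (Sum.elim bb b i) • Sum.elim b bb i = y := by
  have hB : ∀ i, B i = Sum.elim b bb i := by rintro (i | i) <;> simp [hb, hbb]
  simpa only [hB] using B.sum_bilin_smul_eq κ (Sum.elim bb b) (by
    rintro (i | i) (j | j) <;> simp [hB, hbiso, hbbiso, hpair, hsymm (bb i), eq_comm]) y

theorem ι_mul_eq_sum_of_ι_mul_eq_zero
    (hexp : ∀ y, ∑ i, κ y (Sum.elim bb b i) • Sum.elim b bb i = y) {u : CliffordAlgebra Q}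
    (hu : ∀ k, ι Q (bb k) * u = 0) (y : g) :
    ι Q y * u = ∑ p, κ y (bb p) • (ι Q (b p) * u) := by
  conv_lhs => rw [← hexp y]
  simp [Fintype.sum_sum_type, add_mul, Finset.sum_mul, hu]

theorem ι_mul_ι_mul_of_ι_mul_eq_zero (hsymm : ∀ a b : g, κ a b = κ b a) {u : CliffordAlgebra Q}
    (hu : ∀ k, ι Q (bb k) * u = 0) (p q : Fin n) :
    ι Q (bb p) * (ι Q (b q) * u) = (2 * κ (b q) (bb p)) • u := by
  rw [← mul_assoc, ι_mul_ι_eq_smul_one_sub κ hsymm, sub_mul, mul_assoc, hu, mul_zero, sub_zero,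
    smul_mul_assoc, one_mul, hsymm]

theorem cliffordAd_mul_of_ι_mul_eq_zero (hsymm : ∀ a b : g, κ a b = κ b a)
    (hpair : ∀ i j, κ (b i) (bb j) = if i = j then (1 : R) else 0) {u : CliffordAlgebra Q}
    (hu : ∀ k, ι Q (bb k) * u = 0) (x : g) :
    cliffordAd κ (Sum.elim b bb) (Sum.elim bb b) x * u =
      (2 * κ x (∑ p, ⁅b p, bb p⁆)) • u +
        ∑ q, ∑ r, κ x ⁅bb q, bb r⁆ • (ι Q (b q) * (ι Q (b r) * u)) := by
  simp only [cliffordAd, Fintype.sum_sum_type, Sum.elim_inl, Sum.elim_inr, add_mul, Finset.sum_mul,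
    smul_mul_assoc, mul_assoc, hu, mul_zero, smul_zero, Finset.sum_const_zero,
    ι_mul_ι_mul_of_ι_mul_eq_zero κ hsymm hu, smul_smul, hpair]
  simp only [zero_add, mul_ite, mul_one, mul_zero, ite_smul, zero_smul, Finset.sum_ite_eq',
    Finset.mem_univ, if_true]
  rw [map_sum, Finset.mul_sum, Finset.sum_smul]
  simp only [mul_comm]

theorem ι_mul_ι_mul_ι_mul_of_ι_mul_eq_zero (hsymm : ∀ a b : g, κ a b = κ b a)
    {u : CliffordAlgebra Q} (hu : ∀ k, ι Q (bb k) * u = 0) (p q r : Fin n) :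
    ι Q (bb p) * (ι Q (b q) * (ι Q (b r) * u)) =
      (2 * κ (b q) (bb p)) • (ι Q (b r) * u) - (2 * κ (b r) (bb p)) • (ι Q (b q) * u) := by
  rw [← mul_assoc, ι_mul_ι_eq_smul_one_sub κ hsymm, sub_mul, smul_mul_assoc, one_mul, mul_assoc,
    ι_mul_ι_mul_of_ι_mul_eq_zero κ hsymm hu, mul_smul_comm, hsymm (bb p)]

theorem cubicElement_mul_of_ι_mul_eq_zero (hsymm : ∀ a b : g, κ a b = κ b a)
    (hinv : ∀ a b c : g, κ ⁅a, b⁆ c = κ a ⁅b, c⁆)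
    (hexp : ∀ y, ∑ i, κ y (Sum.elim bb b i) • Sum.elim b bb i = y)
    (hpair : ∀ i j, κ (b i) (bb j) = if i = j then (1 : R) else 0)
    (hl : ∀ p q r, κ (bb p) ⁅bb q, bb r⁆ = 0)
    {u : CliffordAlgebra Q} (hu : ∀ k, ι Q (bb k) * u = 0) :
    cubicElement κ (Sum.elim b bb) (Sum.elim bb b) * u =
      (6 : R) • (ι Q (∑ p, ⁅b p, bb p⁆) * u) := by
  set σ := ∑ p, ⁅b p, bb p⁆
  have hσ : ∀ r, ∑ p, κ (b p) ⁅bb p, bb r⁆ = κ σ (bb r) := fun r => by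
    simp only [← hinv, σ, map_sum, LinearMap.sum_apply]
  have hσ' : ∀ q, ∑ p, κ (b p) ⁅bb q, bb p⁆ = -κ σ (bb q) := fun q => by
    simp only [← hσ, ← Finset.sum_neg_distrib, ← map_neg, lie_skew]
  rw [cubicElement_eq_sum_ι_mul_cliffordAd, Finset.sum_mul, ι_mul_eq_sum_of_ι_mul_eq_zero κ hexp hu]
  simp only [Fintype.sum_sum_type, Sum.elim_inl, Sum.elim_inr, mul_assoc,
    cliffordAd_mul_of_ι_mul_eq_zero κ hsymm hpair hu, mul_add, mul_smul_comm, Finset.mul_sum,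
    hu, smul_zero, zero_add, hl, zero_smul, Finset.sum_const_zero, add_zero,
    ι_mul_ι_mul_ι_mul_of_ι_mul_eq_zero κ hsymm hu, hpair, smul_sub, smul_smul]
  simp only [Finset.sum_sub_distrib, mul_ite, mul_one, mul_zero, ite_smul, zero_smul,
    Finset.sum_ite_irrel, Finset.sum_const_zero, Finset.sum_ite_eq', Finset.mem_univ, if_true]
  have e₁ : ∑ p, ∑ r, (κ (b p) ⁅bb p, bb r⁆ * 2) • (ι Q (b r) * u) =
      ∑ r, (2 * κ σ (bb r)) • (ι Q (b r) * u) := by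
    rw [Finset.sum_comm]
    refine Finset.sum_congr rfl fun r _ => ?_
    rw [← Finset.sum_smul, ← Finset.sum_mul, hσ, mul_comm]
  have e₂ : ∑ p, ∑ q, (κ (b p) ⁅bb q, bb p⁆ * 2) • (ι Q (b q) * u) =
      ∑ q, (-2 * κ σ (bb q)) • (ι Q (b q) * u) := by
    rw [Finset.sum_comm]
    refine Finset.sum_congr rfl fun q _ => ?_
    rw [← Finset.sum_smul, ← Finset.sum_mul, hσ', neg_mul_comm, mul_comm]
  rw [e₁, e₂, ← Finset.sum_sub_distrib, ← Finset.sum_add_distrib, Finset.smul_sum]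
  refine Finset.sum_congr rfl fun r _ => ?_
  rw [hsymm (bb r)]
  module

theorem ι_mul_prod_map_ι_eq_zero (hbbiso : ∀ i j, κ (bb i) (bb j) = 0) {l : List (Fin n)}
    {k : Fin n} (hk : k ∈ l) : ι Q (bb k) * (l.map fun j => ι Q (bb j)).prod = 0 :=
  List.mul_prod_eq_zero_of_mem (ι_mul_self_eq_zero κ (hbbiso k k))
    (by simpa using fun j _ => ι_mul_ι_eq_neg_of_bilin_eq_zero κ (hbbiso k j) (hbbiso j k))
    (List.mem_map_of_mem hk)

theorem prod_map_ι_mul_eq_zero (hbbiso : ∀ i j, κ (bb i) (bb j) = 0) {l : List (Fin n)}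
    {k : Fin n} (hk : k ∈ l) : (l.map fun j => ι Q (bb j)).prod * ι Q (bb k) = 0 :=
  List.prod_mul_eq_zero_of_mem (ι_mul_self_eq_zero κ (hbbiso k k))
    (by simpa using fun j _ => ι_mul_ι_eq_neg_of_bilin_eq_zero κ (hbbiso k j) (hbbiso j k))
    (List.mem_map_of_mem hk)

theorem ι_mul_reverse_eq_zero {u : CliffordAlgebra Q} (hu : ∀ k, u * ι Q (bb k) = 0) (k : Fin n) :
    ι Q (bb k) * reverse u = 0 := by
  rw [← reverse_ι, ← reverse.map_mul, hu, map_zero]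

theorem mul_cubicElement_of_mul_ι_eq_zero (hsymm : ∀ a b : g, κ a b = κ b a)
    (hinv : ∀ a b c : g, κ ⁅a, b⁆ c = κ a ⁅b, c⁆)
    (hexp : ∀ y, ∑ i, κ y (Sum.elim bb b i) • Sum.elim b bb i = y)
    (hpair : ∀ i j, κ (b i) (bb j) = if i = j then (1 : R) else 0)
    (hl : ∀ p q r, κ (bb p) ⁅bb q, bb r⁆ = 0)
    {u : CliffordAlgebra Q} (hu : ∀ k, u * ι Q (bb k) = 0) :
    u * cubicElement κ (Sum.elim b bb) (Sum.elim bb b) =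
      (-6 : R) • (u * ι Q (∑ p, ⁅b p, bb p⁆)) := by
  apply reverse_involutive.injective
  rw [reverse.map_mul, reverse_cubicElement κ hsymm hinv, neg_mul,
    cubicElement_mul_of_ι_mul_eq_zero κ hsymm hinv hexp hpair hl
      (ι_mul_reverse_eq_zero κ hu), map_smul, reverse.map_mul, reverse_ι, neg_smul]

theorem mul_cliffordAd_of_mul_ι_eq_zero (hsymm : ∀ a b : g, κ a b = κ b a)
    (hpair : ∀ i j, κ (b i) (bb j) = if i = j then (1 : R) else 0) {u : CliffordAlgebra Q}
    (hu : ∀ k, u * ι Q (bb k) = 0) {x : g} (hx : ∀ q r, κ x ⁅bb q, bb r⁆ = 0) :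
    u * cliffordAd κ (Sum.elim b bb) (Sum.elim bb b) x = (-(2 * κ x (∑ p, ⁅b p, bb p⁆))) • u := by
  apply reverse_involutive.injective
  rw [reverse.map_mul, reverse_cliffordAd, neg_mul,
    cliffordAd_mul_of_ι_mul_eq_zero κ hsymm hpair (ι_mul_reverse_eq_zero κ hu)]
  simp [hx]

end Polarized

open CliffordAlgebra in
theorem statement8_general (g : Type*) [LieRing g] [LieAlgebra ℂ g]
    (κ : LinearMap.BilinForm ℂ g)
    (hsymm : ∀ a b : g, κ a b = κ b a)
    (hinv : ∀ a b c : g, κ ⁅a, b⁆ c = κ a ⁅b, c⁆)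
    (n : ℕ) (B : Module.Basis (Fin n ⊕ Fin n) ℂ g)
    (b bb : Fin n → g)
    (hb : ∀ i, b i = B (Sum.inl i)) (hbb : ∀ i, bb i = B (Sum.inr i))
    (hbiso : ∀ i j, κ (b i) (b j) = 0)
    (hbbiso : ∀ i j, κ (bb i) (bb j) = 0)
    (hpair : ∀ i j, κ (b i) (bb j) = if i = j then (1 : ℂ) else 0)
    (hsubalgbar : ∀ i j, ⁅bb i, bb j⁆ ∈ Submodule.span ℂ (Set.range bb))
    (Θ : CliffordAlgebra (LinearMap.BilinMap.toQuadraticMap κ))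
    (hΘ : Θ = (6 : ℂ)⁻¹ •
      ∑ i : Fin n ⊕ Fin n, ∑ j : Fin n ⊕ Fin n, ∑ k : Fin n ⊕ Fin n,
        κ (B i) ⁅B j, B k⁆ •
          (ι (LinearMap.BilinMap.toQuadraticMap κ) (B i.swap) *
            ι (LinearMap.BilinMap.toQuadraticMap κ) (B j.swap) *
            ι (LinearMap.BilinMap.toQuadraticMap κ) (B k.swap)))
    (u : CliffordAlgebra (LinearMap.BilinMap.toQuadraticMap κ))
    (hu : u = ((List.finRange n).map fun j =>
      ι (LinearMap.BilinMap.toQuadraticMap κ) (bb j)).prod)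
    (ρ : g) (hρ : ρ = (2 : ℂ)⁻¹ • ∑ j : Fin n, ⁅b j, bb j⁆)
    (h : g) (lam : Fin n → ℂ)
    (hhbb : ∀ j, ⁅h, bb j⁆ = -(lam j) • bb j)
    (w : CliffordAlgebra (LinearMap.BilinMap.toQuadraticMap κ))
    (hw : w = u * ι (LinearMap.BilinMap.toQuadraticMap κ) h) :
    (4 : ℂ)⁻¹ • (Θ * w + ((-1 : ℂ) ^ n) • (w * Θ)) =
      (2 : ℂ)⁻¹ • (ι (LinearMap.BilinMap.toQuadraticMap κ) ρ * w +
        ((-1 : ℂ) ^ (n + 1)) • (w * ι (LinearMap.BilinMap.toQuadraticMap κ) ρ)) := by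
  have hB : ∀ i, B i = Sum.elim b bb i := by rintro (i | i) <;> simp [hb, hbb]
  have hBswap : ∀ i, B i.swap = Sum.elim bb b i := by rintro (i | i) <;> simp [hb, hbb]
  have hexp := B.sum_bilin_elim_smul_elim_eq κ hsymm hb hbb hbiso hbbiso hpair
  replace hΘ : Θ = (6 : ℂ)⁻¹ • cubicElement κ (Sum.elim b bb) (Sum.elim bb b) := by
    simp only [hΘ, hBswap, hB, cubicElement]
  have hu_left : ∀ k, ι _ (bb k) * u = 0 := fun k =>
    hu ▸ ι_mul_prod_map_ι_eq_zero κ hbbiso (List.mem_finRange k)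
  have hu_right : ∀ k, u * ι _ (bb k) = 0 := fun k =>
    hu ▸ prod_map_ι_mul_eq_zero κ hbbiso (List.mem_finRange k)
  have hl : ∀ p q r, κ (bb p) ⁅bb q, bb r⁆ = 0 := fun p q r =>
    (Submodule.span_le (p := LinearMap.ker (κ (bb p))).mpr
      (Set.range_subset_iff.mpr (hbbiso p))) (hsubalgbar q r)
  have hh : ∀ q r, κ h ⁅bb q, bb r⁆ = 0 := fun q r => by
    rw [← hinv, hhbb, map_smul, LinearMap.smul_apply, hbbiso, smul_zero]
  have hΘu : Θ * u = ι _ (∑ p, ⁅b p, bb p⁆) * u := by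
    rw [hΘ, smul_mul_assoc, cubicElement_mul_of_ι_mul_eq_zero κ hsymm hinv hexp hpair hl
      hu_left, smul_smul]
    norm_num
  have hwΘ : w * Θ = (-(2 * κ h (∑ p, ⁅b p, bb p⁆))) • u +
      u * ι _ (∑ p, ⁅b p, bb p⁆) * ι _ h := by
    rw [hw, hΘ, mul_smul_comm, mul_assoc,
      eq_sub_of_add_eq' (cubicElement_mul_ι_add_ι_mul_cubicElement κ hsymm hinv hexp h), mul_sub,
      mul_smul_comm, mul_cliffordAd_of_mul_ι_eq_zero κ hsymm hpair hu_right hh, ← mul_assoc,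
      mul_cubicElement_of_mul_ι_eq_zero κ hsymm hinv hexp hpair hl hu_right,
      smul_mul_assoc]
    module
  rw [hwΘ, hw, ← mul_assoc, hΘu, mul_assoc u (ι _ h), ι_mul_ι_eq_smul_one_sub κ hsymm h, hρ]
  simp only [map_smul, pow_succ, mul_sub, mul_smul_comm, smul_mul_assoc, mul_one, mul_assoc]
  module

open CliffordAlgebra in
/-- Suppose moreover `[h,b_j] = λ_j b_j` and `[h,b̄_j] = −λ_j b̄_j`.
With `u := ι(b̄_1)···ι(b̄_n)`, `ρ := (1/2) Σ_j [b_j,b̄_j]` and `w := u·ι(h)`, one has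
`(1/4)(Θ·w + (−1)^n w·Θ) = (1/2)(ι(ρ)·w + (−1)^{n+1} w·ι(ρ))` in `Cl(g,κ)`. -/
theorem statement8 (g : Type*) [LieRing g] [LieAlgebra ℂ g] [FiniteDimensional ℂ g]
    (κ : LinearMap.BilinForm ℂ g)
    (hsymm : ∀ a b : g, κ a b = κ b a)
    (hinv : ∀ a b c : g, κ ⁅a, b⁆ c = κ a ⁅b, c⁆)
    (hnd : κ.Nondegenerate)
    (n : ℕ) (B : Module.Basis (Fin n ⊕ Fin n) ℂ g)
    (b bb : Fin n → g)
    (hb : ∀ i, b i = B (Sum.inl i)) (hbb : ∀ i, bb i = B (Sum.inr i))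
    (hbiso : ∀ i j, κ (b i) (b j) = 0)
    (hbbiso : ∀ i j, κ (bb i) (bb j) = 0)
    (hpair : ∀ i j, κ (b i) (bb j) = if i = j then (1 : ℂ) else 0)
    (hsubalg : ∀ i j, ⁅b i, b j⁆ ∈ Submodule.span ℂ (Set.range b))
    (hsubalgbar : ∀ i j, ⁅bb i, bb j⁆ ∈ Submodule.span ℂ (Set.range bb))
    (Θ : CliffordAlgebra (LinearMap.BilinMap.toQuadraticMap κ))
    (hΘ : Θ = (6 : ℂ)⁻¹ •
      ∑ i : Fin n ⊕ Fin n, ∑ j : Fin n ⊕ Fin n, ∑ k : Fin n ⊕ Fin n,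
        κ (B i) ⁅B j, B k⁆ •
          (ι (LinearMap.BilinMap.toQuadraticMap κ) (B i.swap) *
            ι (LinearMap.BilinMap.toQuadraticMap κ) (B j.swap) *
            ι (LinearMap.BilinMap.toQuadraticMap κ) (B k.swap)))
    (u : CliffordAlgebra (LinearMap.BilinMap.toQuadraticMap κ))
    (hu : u = ((List.finRange n).map fun j =>
      ι (LinearMap.BilinMap.toQuadraticMap κ) (bb j)).prod)
    (ρ : g) (hρ : ρ = (2 : ℂ)⁻¹ • ∑ j : Fin n, ⁅b j, bb j⁆)
    (h : g) (lam : Fin n → ℂ)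
    (hhb : ∀ j, ⁅h, b j⁆ = lam j • b j)
    (hhbb : ∀ j, ⁅h, bb j⁆ = -(lam j) • bb j)
    (w : CliffordAlgebra (LinearMap.BilinMap.toQuadraticMap κ))
    (hw : w = u * ι (LinearMap.BilinMap.toQuadraticMap κ) h) :
    (4 : ℂ)⁻¹ • (Θ * w + ((-1 : ℂ) ^ n) • (w * Θ)) =
      (2 : ℂ)⁻¹ • (ι (LinearMap.BilinMap.toQuadraticMap κ) ρ * w +
        ((-1 : ℂ) ^ (n + 1)) • (w * ι (LinearMap.BilinMap.toQuadraticMap κ) ρ)) :=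
  statement8_general g κ hsymm hinv n B b bb hb hbb hbiso hbbiso hpair hsubalgbar Θ hΘ u hu ρ hρ h
    lam hhbb w hw
end

section
/- For 0 ≤ p, q ≤ n, the subspace 𝔘_{p,q} := span_ℂ{u_{P,Q} : P, Q ⊆ {1,…,n}, |P| = p, |Q| = q}, where u_{P,Q} := (∏_{j∈P} ι(b_j))·u·(∏_{j∈Q} ι(b_j)) (products in increasing order of indices), is exactly the joint eigenspace {w ∈ Cl(V,κ) : τ·w − w·τ' = i(p + q − n)·w and τ·w + w·τ' = i(p − q)·w}. -/
/-!
Write `X_j = ι(b_j)` and `Y_j = ι(b̄_j)`, so that `τ = -(n i/2) + (i/2) Σ X_j Y_j` and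
`τ' = (n i/2) - (i/2) Σ Y_j X_j`. Since `Y_j` kills `u` from both sides, while `X_j Y_j` commutes
with `X_k` for `k ≠ j` and `X_j Y_j X_j = 2 X_j`, left multiplication by `X_j Y_j` acts on `u_{P,Q}`
by `2` or `0` according as `j ∈ P`; symmetrically for right multiplication by `Y_j X_j` and `Q`.
So `u_{P,Q}` is a joint eigenvector of `w ↦ Σ X_j Y_j w` and `w ↦ w Σ Y_j X_j` with eigenvalues
`2|P|` and `2|Q|`, which turns the two equations for `w` into these two eigenvalue conditions.

The `u_{P,Q}` span the algebra: the span of all `X_l u X_r` is a left ideal (commute `Y_j` to the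
right until it hits `u`), and it contains `1`, because `z = ½ (X_j (Y_j z) ± (Y_j z) X_j)` for
`z = Y_{j+1} ⋯ Y_n` peels the factors of `u` off one at a time. As eigenspaces for distinct
eigenvalues are independent, the joint eigenspace for `(2p, 2q)` is then exactly the span of the
`u_{P,Q}` with `|P| = p`, `|Q| = q`.
-/

section Anticommuting

variable {A ι : Type*} [Ring A]

theorem eq_zero_of_add_self_eq_zero [IsAddTorsionFree A] {x : A} (h : x + x = 0) : x = 0 :=
  IsAddTorsionFree.nsmul_right_injective two_ne_zero (by simpa only [two_nsmul, smul_zero] using h)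

theorem commute_mul_of_anticomm {a b c : A} (hb : a * b + b * a = 0) (hc : a * c + c * a = 0) :
    Commute a (b * c) := by
  calc a * (b * c) = -(b * (a * c)) := by
        rw [← mul_assoc, eq_neg_of_add_eq_zero_left hb, neg_mul, mul_assoc]
    _ = b * c * a := by rw [eq_neg_of_add_eq_zero_left hc, mul_neg, neg_neg, mul_assoc]

theorem mul_list_prod_map_of_anticomm {x : A} {f : ι → A} {l : List ι}
    (h : ∀ k ∈ l, x * f k + f k * x = 0) :
    x * (l.map f).prod = (-1 : ℤ) ^ l.length • ((l.map f).prod * x) := by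
  induction l with
  | nil => simp
  | cons a t ih =>
    rw [List.map_cons, List.prod_cons, ← mul_assoc,
      eq_neg_of_add_eq_zero_left (h a List.mem_cons_self), neg_mul, mul_assoc,
      ih fun k hk => h k (List.mem_cons_of_mem a hk), mul_smul_comm, List.length_cons, pow_succ,
      mul_neg_one, neg_smul, mul_assoc]

variable {z : ι → A}

theorem exists_list_prod_map_eq_zsmul_of_perm (hz : ∀ a b, z a * z b + z b * z a = 0)
    {l₁ l₂ : List ι} (h : l₁.Perm l₂) : ∃ ε : ℤ, (l₁.map z).prod = ε • (l₂.map z).prod := by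
  induction h with
  | nil => exact ⟨1, by simp⟩
  | cons a _ ih =>
    obtain ⟨ε, hε⟩ := ih
    exact ⟨ε, by simp only [List.map_cons, List.prod_cons, hε, mul_smul_comm]⟩
  | swap a b l =>
    refine ⟨-1, ?_⟩
    simp [← mul_assoc, eq_neg_of_add_eq_zero_left (hz b a)]
  | trans _ _ ih₁ ih₂ =>
    obtain ⟨ε₁, hε₁⟩ := ih₁
    obtain ⟨ε₂, hε₂⟩ := ih₂
    exact ⟨ε₁ * ε₂, by rw [hε₁, hε₂, smul_smul]⟩

variable [IsAddTorsionFree A]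

theorem mul_list_prod_map_eq_zero_of_mem (hz : ∀ a b, z a * z b + z b * z a = 0)
    {x : ι} {l : List ι} (hx : x ∈ l) : z x * (l.map z).prod = 0 := by
  classical
  obtain ⟨ε, hε⟩ := exists_list_prod_map_eq_zsmul_of_perm hz (List.perm_cons_erase hx)
  rw [hε, mul_smul_comm, List.map_cons, List.prod_cons, ← mul_assoc,
    eq_zero_of_add_self_eq_zero (hz x x), zero_mul, smul_zero]

theorem list_prod_map_eq_zero_of_not_nodup (hz : ∀ a b, z a * z b + z b * z a = 0)
    {l : List ι} (hl : ¬ l.Nodup) : (l.map z).prod = 0 := by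
  induction l with
  | nil => exact absurd List.nodup_nil hl
  | cons a t ih =>
    rw [List.nodup_cons, not_and_or, not_not] at hl
    rw [List.map_cons, List.prod_cons]
    rcases hl with ha | ht
    · exact mul_list_prod_map_eq_zero_of_mem hz ha
    · rw [ih ht, mul_zero]

def orderedProd [LinearOrder ι] (f : ι → A) (P : Finset ι) : A :=
  ((P.sort (· ≤ ·)).map f).prod

theorem exists_list_prod_map_eq_zsmul_orderedProd [LinearOrder ι]
    (hz : ∀ a b, z a * z b + z b * z a = 0) (l : List ι) :
    ∃ (ε : ℤ) (P : Finset ι), (l.map z).prod = ε • orderedProd z P := by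
  by_cases hl : l.Nodup
  · obtain ⟨ε, hε⟩ := exists_list_prod_map_eq_zsmul_of_perm hz
      (List.perm_of_nodup_nodup_toFinset_eq hl (l.toFinset.sort_nodup (· ≤ ·))
        (by rw [Finset.sort_toFinset]))
    exact ⟨ε, l.toFinset, hε⟩
  · exact ⟨0, ∅, by rw [list_prod_map_eq_zero_of_not_nodup hz hl, zero_smul]⟩

end Anticommuting

section CommuteListProd

variable {A ι : Type*} [Ring A] {c : A} {f : ι → A} {j : ι} {s : ℕ}

theorem mul_list_prod_map_of_mem (hc : ∀ k ≠ j, Commute c (f k)) (hj : c * f j = s • f j)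
    {l : List ι} (hl : j ∈ l) : c * (l.map f).prod = s • (l.map f).prod := by
  induction l with
  | nil => cases hl
  | cons a t ih =>
    rw [List.map_cons, List.prod_cons, ← mul_assoc]
    by_cases ha : a = j
    · rw [ha, hj, smul_mul_assoc]
    · rw [(hc a ha).eq, mul_assoc, ih (by simpa [Ne.symm ha] using hl), mul_smul_comm]

theorem list_prod_map_mul_of_mem (hc : ∀ k ≠ j, Commute (f k) c) (hj : f j * c = s • f j)
    {l : List ι} (hl : j ∈ l) : (l.map f).prod * c = s • (l.map f).prod := by
  induction l with
  | nil => cases hl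
  | cons a t ih =>
    rw [List.map_cons, List.prod_cons, mul_assoc]
    by_cases ht : j ∈ t
    · rw [ih ht, mul_smul_comm]
    · obtain rfl : j = a := by simpa [ht] using hl
      have hcomm : Commute (t.map f).prod c := Commute.list_prod_left _ _ fun x hx => by
        obtain ⟨k, hk, rfl⟩ := List.mem_map.mp hx
        exact hc k fun h => ht (h ▸ hk)
      rw [hcomm.eq, ← mul_assoc, hj, smul_mul_assoc]

end CommuteListProd

/-- Canonical anticommutation relations, in the Clifford normalisation `{X i, Y j} = 2 δ i j`. -/
structure IsCARFamily {A ι : Type*} [Ring A] (X Y : ι → A) : Prop where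
  anticomm_X : ∀ i j, X i * X j + X j * X i = 0
  anticomm_Y : ∀ i j, Y i * Y j + Y j * Y i = 0
  anticomm_XY_self : ∀ i, X i * Y i + Y i * X i = 2
  anticomm_XY : ∀ i j, i ≠ j → X i * Y j + Y j * X i = 0

namespace IsCARFamily

variable {A ι : Type*} [Ring A] {X Y : ι → A}

theorem commute_X_mul_Y_X (h : IsCARFamily X Y) {j k : ι} (hkj : k ≠ j) :
    Commute (X j * Y j) (X k) :=
  (commute_mul_of_anticomm (h.anticomm_X k j) (h.anticomm_XY k j hkj)).symm

theorem commute_X_Y_mul_X (h : IsCARFamily X Y) {j k : ι} (hkj : k ≠ j) :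
    Commute (X k) (Y j * X j) :=
  commute_mul_of_anticomm (h.anticomm_XY k j hkj) (h.anticomm_X k j)

variable [IsAddTorsionFree A]

theorem X_mul_Y_mul_X (h : IsCARFamily X Y) (j : ι) : X j * Y j * X j = 2 • X j := by
  rw [mul_assoc, eq_sub_of_add_eq' (h.anticomm_XY_self j), mul_sub, ← mul_assoc,
    eq_zero_of_add_self_eq_zero (h.anticomm_X j j),
    zero_mul, sub_zero, mul_two, two_nsmul]

variable [LinearOrder ι] [Fintype ι]

theorem Y_mul_orderedProd_univ (h : IsCARFamily X Y) (j : ι) :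
    Y j * orderedProd Y Finset.univ = 0 :=
  mul_list_prod_map_eq_zero_of_mem h.anticomm_Y ((Finset.mem_sort _).2 (Finset.mem_univ j))

theorem orderedProd_univ_mul_Y (h : IsCARFamily X Y) (j : ι) :
    orderedProd Y Finset.univ * Y j = 0 := by
  have hdup : ¬ (Finset.univ.sort (· ≤ ·) ++ [j]).Nodup := by
    simp [List.nodup_append]
  simpa [orderedProd] using list_prod_map_eq_zero_of_not_nodup h.anticomm_Y hdup

end IsCARFamily

/-- The `u_{P,Q}` of the statement. -/
def carMonomial {A ι : Type*} [Ring A] [LinearOrder ι] [Fintype ι] (X Y : ι → A)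
    (P Q : Finset ι) : A :=
  orderedProd X P * orderedProd Y Finset.univ * orderedProd X Q

namespace IsCARFamily

variable {A ι : Type*} [Ring A] [IsAddTorsionFree A] [LinearOrder ι] [Fintype ι] {X Y : ι → A}

theorem X_mul_Y_mul_carMonomial (h : IsCARFamily X Y) (j : ι) (P Q : Finset ι) :
    X j * Y j * carMonomial X Y P Q = (if j ∈ P then 2 else 0) • carMonomial X Y P Q := by
  unfold carMonomial
  rw [← mul_assoc, ← mul_assoc]
  split_ifs with hj
  · have habsorb : X j * Y j * orderedProd X P = 2 • orderedProd X P :=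
      mul_list_prod_map_of_mem (fun k hk => h.commute_X_mul_Y_X hk) (h.X_mul_Y_mul_X j)
        ((Finset.mem_sort _).2 hj)
    rw [habsorb, smul_mul_assoc, smul_mul_assoc]
  · have hcomm : Commute (X j * Y j) (orderedProd X P) :=
      Commute.list_prod_right _ _ fun x hx => by
        obtain ⟨k, hk, rfl⟩ := List.mem_map.mp hx
        exact h.commute_X_mul_Y_X fun hkj => hj (hkj ▸ (Finset.mem_sort _).1 hk)
    rw [hcomm.eq]
    simp only [mul_assoc, h.Y_mul_orderedProd_univ, mul_zero, zero_mul, zero_smul]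

theorem carMonomial_mul_Y_mul_X (h : IsCARFamily X Y) (j : ι) (P Q : Finset ι) :
    carMonomial X Y P Q * (Y j * X j) = (if j ∈ Q then 2 else 0) • carMonomial X Y P Q := by
  unfold carMonomial
  rw [mul_assoc]
  split_ifs with hj
  · have habsorb : orderedProd X Q * (Y j * X j) = 2 • orderedProd X Q :=
      list_prod_map_mul_of_mem (fun k hk => h.commute_X_Y_mul_X hk)
        (by rw [← mul_assoc, h.X_mul_Y_mul_X]) ((Finset.mem_sort _).2 hj)
    rw [habsorb, mul_smul_comm]
  · have hcomm : Commute (orderedProd X Q) (Y j * X j) :=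
      Commute.list_prod_left _ _ fun x hx => by
        obtain ⟨k, hk, rfl⟩ := List.mem_map.mp hx
        exact h.commute_X_Y_mul_X fun hkj => hj (hkj ▸ (Finset.mem_sort _).1 hk)
    rw [hcomm.eq, ← mul_assoc, ← mul_assoc, mul_assoc _ _ (Y j), h.orderedProd_univ_mul_Y,
      mul_zero, zero_mul, zero_mul, zero_smul]

theorem sum_X_mul_Y_mul_carMonomial (h : IsCARFamily X Y) (P Q : Finset ι) :
    (∑ j, X j * Y j) * carMonomial X Y P Q = (2 * P.card) • carMonomial X Y P Q := by
  rw [Finset.sum_mul, Finset.sum_congr rfl fun j _ => h.X_mul_Y_mul_carMonomial j P Q,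
    ← Finset.sum_smul, Finset.sum_ite_mem, Finset.univ_inter, Finset.sum_const, smul_eq_mul,
    mul_comm]

theorem carMonomial_mul_sum_Y_mul_X (h : IsCARFamily X Y) (P Q : Finset ι) :
    carMonomial X Y P Q * (∑ j, Y j * X j) = (2 * Q.card) • carMonomial X Y P Q := by
  rw [Finset.mul_sum, Finset.sum_congr rfl fun j _ => h.carMonomial_mul_Y_mul_X j P Q,
    ← Finset.sum_smul, Finset.sum_ite_mem, Finset.univ_inter, Finset.sum_const, smul_eq_mul,
    mul_comm]

end IsCARFamily

theorem Submodule.mul_mem_of_adjoin_eq_top {K A : Type*} [CommSemiring K] [Semiring A]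
    [Algebra K A] {s : Set A} (hs : Algebra.adjoin K s = ⊤) {L : Submodule K A}
    (hL : ∀ g ∈ s, ∀ w ∈ L, g * w ∈ L) (a : A) {w : A} (hw : w ∈ L) : a * w ∈ L := by
  have ha : a ∈ Algebra.adjoin K s := hs ▸ Algebra.mem_top
  induction ha using Algebra.adjoin_induction generalizing w with
  | mem g hg => exact hL g hg w hw
  | algebraMap r => rw [← Algebra.smul_def]; exact L.smul_mem r hw
  | add x y _ _ hx hy => rw [add_mul]; exact add_mem (hx hw) (hy hw)
  | mul x y _ _ hx hy => rw [mul_assoc]; exact hx (hy hw)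

namespace IsCARFamily

variable {K A ι : Type*} [Field K] [CharZero K] [Ring A] [Algebra K A] {X Y : ι → A}

theorem one_mem_of_list_prod_mem (h : IsCARFamily X Y) {L : Submodule K A}
    (hXL : ∀ j, ∀ w ∈ L, X j * w ∈ L) (hLX : ∀ j, ∀ w ∈ L, w * X j ∈ L) {l : List ι} (hl : l.Nodup)
    (hmem : (l.map Y).prod ∈ L) : (1 : A) ∈ L := by
  induction l with
  | nil => simpa using hmem
  | cons j t ih =>
    rw [List.nodup_cons] at hl
    refine ih hl.2 ?_
    set z := (t.map Y).prod
    have hYz : Y j * z ∈ L := by simpa using hmem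
    have hXz : X j * z = (-1 : ℤ) ^ t.length • (z * X j) :=
      mul_list_prod_map_of_anticomm fun k hk => h.anticomm_XY j k fun hjk => hl.1 (hjk ▸ hk)
    have htwo : (2 : K) • z = X j * (Y j * z) + (-1 : ℤ) ^ t.length • (Y j * z * X j) := by
      rw [two_smul, ← two_mul, ← h.anticomm_XY_self j, add_mul, mul_assoc, mul_assoc, hXz,
        mul_smul_comm, mul_assoc]
    refine (Submodule.smul_mem_iff L (two_ne_zero (α := K))).mp ?_
    rw [htwo]
    exact add_mem (hXL j _ hYz) (Submodule.smul_of_tower_mem L _ (hLX j _ hYz))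

end IsCARFamily

section CarSpan

variable {K A ι : Type*} [CommRing K] [Ring A] [Algebra K A] [LinearOrder ι] [Fintype ι]
  {X Y : ι → A}

variable (K) in
def carSpan (X Y : ι → A) : Submodule K A :=
  Submodule.span K
    {w | ∃ l r : List ι, w = (l.map X).prod * orderedProd Y Finset.univ * (r.map X).prod}

theorem X_mul_mem_carSpan (j : ι) {w : A} (hw : w ∈ carSpan K X Y) : X j * w ∈ carSpan K X Y := by
  refine (Submodule.span_le (p := (carSpan K X Y).comap (LinearMap.mulLeft K (X j)))).2 ?_ hw
  rintro _ ⟨l, r, rfl⟩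
  exact Submodule.subset_span ⟨j :: l, r, by simp [mul_assoc]⟩

theorem mul_X_mem_carSpan (j : ι) {w : A} (hw : w ∈ carSpan K X Y) : w * X j ∈ carSpan K X Y := by
  refine (Submodule.span_le (p := (carSpan K X Y).comap (LinearMap.mulRight K (X j)))).2 ?_ hw
  rintro _ ⟨l, r, rfl⟩
  exact Submodule.subset_span ⟨l, r ++ [j], by simp [mul_assoc]⟩

theorem IsCARFamily.Y_mul_mem_carSpan [IsAddTorsionFree A] (h : IsCARFamily X Y) (j : ι)
    {w : A} (hw : w ∈ carSpan K X Y) : Y j * w ∈ carSpan K X Y := by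
  refine (Submodule.span_le (p := (carSpan K X Y).comap (LinearMap.mulLeft K (Y j)))).2 ?_ hw
  rintro _ ⟨l, r, rfl⟩
  induction l with
  | nil => simp [← mul_assoc, h.Y_mul_orderedProd_univ]
  | cons a t ih =>
    set m := (t.map X).prod * orderedProd Y Finset.univ * (r.map X).prod
    have hm : m ∈ carSpan K X Y := Submodule.subset_span ⟨t, r, rfl⟩
    have hYm : Y j * m ∈ carSpan K X Y := ih
    have hcons : Y j * (((a :: t).map X).prod * orderedProd Y Finset.univ * (r.map X).prod) =
        Y j * X a * m := by
      simp only [m, List.map_cons, List.prod_cons, mul_assoc]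
    change Y j * _ ∈ carSpan K X Y
    rw [hcons]
    by_cases haj : a = j
    · subst haj
      rw [eq_sub_of_add_eq' (h.anticomm_XY_self a), sub_mul, two_mul, mul_assoc]
      exact sub_mem (add_mem hm hm) (X_mul_mem_carSpan a hYm)
    · rw [eq_neg_of_add_eq_zero_right (h.anticomm_XY a j haj), neg_mul, mul_assoc]
      exact neg_mem (X_mul_mem_carSpan a hYm)

end CarSpan

theorem carSpan_le_iSup_span_carMonomial {K A ι : Type*} [CommRing K] [Ring A] [Algebra K A]
    [IsAddTorsionFree A] [LinearOrder ι] [Fintype ι] {X Y : ι → A}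
    (hX : ∀ i j, X i * X j + X j * X i = 0) :
    carSpan K X Y ≤ ⨆ (p : ℕ) (q : ℕ), Submodule.span K
      {w | ∃ P Q : Finset ι, P.card = p ∧ Q.card = q ∧ w = carMonomial X Y P Q} := by
  refine Submodule.span_le.2 ?_
  rintro _ ⟨l, r, rfl⟩
  obtain ⟨ε₁, P, hP⟩ := exists_list_prod_map_eq_zsmul_orderedProd hX l
  obtain ⟨ε₂, Q, hQ⟩ := exists_list_prod_map_eq_zsmul_orderedProd hX r
  rw [SetLike.mem_coe, hP, hQ, smul_mul_assoc, smul_mul_assoc, mul_smul_comm]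
  refine zsmul_mem (zsmul_mem ?_ _) _
  exact Submodule.mem_iSup_of_mem P.card <| Submodule.mem_iSup_of_mem Q.card <|
    Submodule.subset_span ⟨P, Q, rfl, rfl, rfl⟩

theorem iSupIndep.inf_iSup_of_le {α ι : Type*} [CompleteLattice α] [IsModularLattice α]
    {E G : ι → α} (hE : iSupIndep E) (hGE : ∀ i, G i ≤ E i) (i : ι) :
    E i ⊓ ⨆ j, G j = G i := by
  rw [iSup_split_single G i, inf_comm, sup_inf_assoc_of_le _ (hGE i)]
  exact sup_eq_left.2 <|
    (inf_le_inf_right _ (iSup₂_mono fun j _ => hGE j)).trans ((hE i).symm.le_bot.trans bot_le)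

namespace IsCARFamily

variable {K A ι : Type*} [Field K] [CharZero K] [Ring A] [Algebra K A] [LinearOrder ι] [Fintype ι]
  {X Y : ι → A}

theorem carSpan_eq_top (h : IsCARFamily X Y)
    (hgen : Algebra.adjoin K (Set.range X ∪ Set.range Y) = ⊤) : carSpan K X Y = ⊤ := by
  have := IsAddTorsionFree.of_isTorsionFree K A
  have hone : (1 : A) ∈ carSpan K X Y :=
    h.one_mem_of_list_prod_mem (fun j _ => X_mul_mem_carSpan j) (fun j _ => mul_X_mem_carSpan j)
      (Finset.univ.sort_nodup (· ≤ ·)) (Submodule.subset_span ⟨[], [], by simp [orderedProd]⟩)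
  refine eq_top_iff.2 fun a _ => ?_
  simpa using Submodule.mul_mem_of_adjoin_eq_top hgen
    (by rintro _ (⟨j, rfl⟩ | ⟨j, rfl⟩) w hw; exacts [X_mul_mem_carSpan j hw,
      h.Y_mul_mem_carSpan j hw]) a hone

theorem span_carMonomial_eq_eigenspace_inf (h : IsCARFamily X Y)
    (hgen : Algebra.adjoin K (Set.range X ∪ Set.range Y) = ⊤) (p q : ℕ) :
    Submodule.span K {w | ∃ P Q : Finset ι, P.card = p ∧ Q.card = q ∧ w = carMonomial X Y P Q} =
      Module.End.eigenspace (LinearMap.mulLeft K (∑ j, X j * Y j)) (2 * p) ⊓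
        Module.End.eigenspace (LinearMap.mulRight K (∑ j, Y j * X j)) (2 * q) := by
  have := IsAddTorsionFree.of_isTorsionFree K A
  set W : ℕ → ℕ → Submodule K A := fun p q => Submodule.span K
    {w | ∃ P Q : Finset ι, P.card = p ∧ Q.card = q ∧ w = carMonomial X Y P Q}
  set E₁ := fun p : ℕ => Module.End.eigenspace (LinearMap.mulLeft K (∑ j, X j * Y j)) (2 * p)
  set E₂ := fun q : ℕ => Module.End.eigenspace (LinearMap.mulRight K (∑ j, Y j * X j)) (2 * q)
  have hWE₁ : ∀ p q, W p q ≤ E₁ p := by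
    intro p q
    refine Submodule.span_le.2 ?_
    rintro _ ⟨P, Q, rfl, -, rfl⟩
    simp [E₁, h.sum_X_mul_Y_mul_carMonomial, ← Nat.cast_smul_eq_nsmul K]
  have hWE₂ : ∀ p q, W p q ≤ E₂ q := by
    intro p q
    refine Submodule.span_le.2 ?_
    rintro _ ⟨P, Q, -, rfl, rfl⟩
    simp [E₂, h.carMonomial_mul_sum_Y_mul_X, ← Nat.cast_smul_eq_nsmul K]
  have hW : ⨆ (p : ℕ) (q : ℕ), W p q = ⊤ :=
    eq_top_iff.2 (h.carSpan_eq_top hgen ▸ carSpan_le_iSup_span_carMonomial h.anticomm_X)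
  have hind (f : Module.End K A) : iSupIndep fun k : ℕ => f.eigenspace (2 * k) :=
    (Module.End.eigenspaces_iSupIndep f).comp fun a b hab => by simpa using hab
  calc W p q = E₂ q ⊓ ⨆ q', W p q' := ((hind _).inf_iSup_of_le (hWE₂ p) q).symm
    _ = E₂ q ⊓ (E₁ p ⊓ ⨆ (p' : ℕ) (q' : ℕ), W p' q') := by
      rw [(hind _).inf_iSup_of_le fun p' => iSup_le (hWE₁ p')]
    _ = E₁ p ⊓ E₂ q := by rw [hW, inf_top_eq, inf_comm]

end IsCARFamily

theorem CliffordAlgebra.isCARFamily_ι {R M σ : Type*} [CommRing R] [AddCommGroup M] [Module R M]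
    [DecidableEq σ] {κ : LinearMap.BilinForm R M} (hsymm : ∀ x y, κ x y = κ y x) {b bb : σ → M}
    (hbiso : ∀ i j, κ (b i) (b j) = 0) (hbbiso : ∀ i j, κ (bb i) (bb j) = 0)
    (hpair : ∀ i j, κ (b i) (bb j) = if i = j then (1 : R) else 0) :
    IsCARFamily (fun i => ι (LinearMap.BilinMap.toQuadraticMap κ) (b i))
      (fun i => ι (LinearMap.BilinMap.toQuadraticMap κ) (bb i)) where
  anticomm_X i j := by simp [ι_mul_ι_add_swap, LinearMap.BilinMap.polar_toQuadraticMap, hbiso]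
  anticomm_Y i j := by simp [ι_mul_ι_add_swap, LinearMap.BilinMap.polar_toQuadraticMap, hbbiso]
  anticomm_XY_self i := by
    simp [ι_mul_ι_add_swap, LinearMap.BilinMap.polar_toQuadraticMap, hsymm (bb i), hpair,
      one_add_one_eq_two, map_ofNat]
  anticomm_XY i j hij := by
    simp [ι_mul_ι_add_swap, LinearMap.BilinMap.polar_toQuadraticMap, hsymm (bb j), hpair, hij]

theorem CliffordAlgebra.adjoin_image_ι_eq_top {R M : Type*} [CommRing R] [AddCommGroup M]
    [Module R M] (Q : QuadraticForm R M) {s : Set M} (hs : Submodule.span R s = ⊤) :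
    Algebra.adjoin R (ι Q '' s) = ⊤ := by
  rw [eq_top_iff, ← CliffordAlgebra.adjoin_range_ι, Algebra.adjoin_le_iff]
  rintro _ ⟨v, rfl⟩
  have hv : ι Q v ∈ Submodule.span R (ι Q '' s) := by
    rw [← Submodule.map_span]
    exact Submodule.mem_map_of_mem (hs ▸ Submodule.mem_top)
  exact Algebra.span_le_adjoin R _ hv

theorem tau_eigen_conditions_iff {A : Type*} [Ring A] [Algebra ℂ A] {n p q : ℕ} {N N' τ τ' : A}
    (hτ : τ = algebraMap ℂ A (-((n : ℂ) * Complex.I) / 2) + (Complex.I / 2) • N)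
    (hτ' : τ' = algebraMap ℂ A (((n : ℂ) * Complex.I) / 2) - (Complex.I / 2) • N') (w : A) :
    (τ * w - w * τ' = (Complex.I * ((p : ℂ) + (q : ℂ) - (n : ℂ))) • w ∧
        τ * w + w * τ' = (Complex.I * ((p : ℂ) - (q : ℂ))) • w) ↔
      (N * w = (2 * p : ℂ) • w ∧ w * N' = (2 * q : ℂ) • w) := by
  simp only [hτ, hτ', Algebra.algebraMap_eq_smul_one, add_mul, mul_sub, smul_mul_assoc,
    mul_smul_comm, one_mul, mul_one]
  constructor
  · rintro ⟨h₁, h₂⟩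
    constructor <;> refine smul_right_injective A Complex.I_ne_zero ?_
    · linear_combination (norm := module) h₁ + h₂
    · linear_combination (norm := module) h₁ - h₂
  · rintro ⟨hN, hN'⟩
    constructor
    · linear_combination (norm := module) (Complex.I / 2) • hN + (Complex.I / 2) • hN'
    · linear_combination (norm := module) (Complex.I / 2) • hN - (Complex.I / 2) • hN'

open CliffordAlgebra in
theorem statement13_general (V : Type*) [AddCommGroup V] [Module ℂ V]
    (κ : LinearMap.BilinForm ℂ V)
    (hsymm : ∀ x y : V, κ x y = κ y x)
    (n : ℕ) (B : Module.Basis (Fin n ⊕ Fin n) ℂ V)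
    (b bb : Fin n → V)
    (hb : ∀ i, b i = B (Sum.inl i)) (hbb : ∀ i, bb i = B (Sum.inr i))
    (hbiso : ∀ i j, κ (b i) (b j) = 0)
    (hbbiso : ∀ i j, κ (bb i) (bb j) = 0)
    (hpair : ∀ i j, κ (b i) (bb j) = if i = j then (1 : ℂ) else 0)
    (u : CliffordAlgebra (LinearMap.BilinMap.toQuadraticMap κ))
    (hu : u = ((List.finRange n).map fun j =>
      ι (LinearMap.BilinMap.toQuadraticMap κ) (bb j)).prod)
    (τ τ' : CliffordAlgebra (LinearMap.BilinMap.toQuadraticMap κ))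
    (hτ : τ = algebraMap ℂ _ (-((n : ℂ) * Complex.I) / 2) +
      (Complex.I / 2) • ∑ j : Fin n,
        ι (LinearMap.BilinMap.toQuadraticMap κ) (b j) *
          ι (LinearMap.BilinMap.toQuadraticMap κ) (bb j))
    (hτ' : τ' = algebraMap ℂ _ (((n : ℂ) * Complex.I) / 2) -
      (Complex.I / 2) • ∑ j : Fin n,
        ι (LinearMap.BilinMap.toQuadraticMap κ) (bb j) *
          ι (LinearMap.BilinMap.toQuadraticMap κ) (b j))
    (U : Finset (Fin n) → Finset (Fin n) → CliffordAlgebra (LinearMap.BilinMap.toQuadraticMap κ))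
    (hU : ∀ P Q : Finset (Fin n), U P Q =
      ((P.sort (· ≤ ·)).map fun j =>
        ι (LinearMap.BilinMap.toQuadraticMap κ) (b j)).prod * u *
      ((Q.sort (· ≤ ·)).map fun j =>
        ι (LinearMap.BilinMap.toQuadraticMap κ) (b j)).prod) :
    ∀ p q : ℕ, p ≤ n → q ≤ n →
      (Submodule.span ℂ
          {w | ∃ P Q : Finset (Fin n), P.card = p ∧ Q.card = q ∧ w = U P Q} :
        Set (CliffordAlgebra (LinearMap.BilinMap.toQuadraticMap κ))) =
      {w | τ * w - w * τ' = (Complex.I * ((p : ℂ) + (q : ℂ) - (n : ℂ))) • w ∧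
           τ * w + w * τ' = (Complex.I * ((p : ℂ) - (q : ℂ))) • w} := by
  intro p q _ _
  have hCAR := CliffordAlgebra.isCARFamily_ι hsymm hbiso hbbiso hpair
  have hspan : Submodule.span ℂ (Set.range b ∪ Set.range bb) = ⊤ := by
    refine eq_top_iff.2 (B.span_eq.symm.le.trans (Submodule.span_mono ?_))
    rintro _ ⟨i | i, rfl⟩
    exacts [Or.inl ⟨i, hb i⟩, Or.inr ⟨i, hbb i⟩]
  have hgen := adjoin_image_ι_eq_top (LinearMap.BilinMap.toQuadraticMap κ) hspan
  rw [Set.image_union, ← Set.range_comp, ← Set.range_comp] at hgen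
  have hUX : U = carMonomial (fun j => ι (LinearMap.BilinMap.toQuadraticMap κ) (b j))
      (fun j => ι (LinearMap.BilinMap.toQuadraticMap κ) (bb j)) := by
    funext P Q
    rw [hU, hu, carMonomial, orderedProd, orderedProd, orderedProd, Fin.sort_univ]
  ext w
  rw [Set.mem_ofPred_eq, tau_eigen_conditions_iff hτ hτ', SetLike.mem_coe, hUX,
    hCAR.span_carMonomial_eq_eigenspace_inf hgen p q]
  simp only [Submodule.mem_inf, Module.End.mem_eigenspace_iff, LinearMap.mulLeft_apply,
    LinearMap.mulRight_apply]

open CliffordAlgebra in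
/-- For `0 ≤ p, q ≤ n`, the subspace
`𝔘_{p,q} := span_ℂ {u_{P,Q} : |P| = p, |Q| = q}` is exactly the joint eigenspace
`{w : τ·w − w·τ' = i(p+q−n)·w and τ·w + w·τ' = i(p−q)·w}`. -/
theorem statement13 (V : Type*) [AddCommGroup V] [Module ℂ V] [FiniteDimensional ℂ V]
    (κ : LinearMap.BilinForm ℂ V)
    (hsymm : ∀ x y : V, κ x y = κ y x)
    (hnd : κ.Nondegenerate)
    (n : ℕ) (B : Module.Basis (Fin n ⊕ Fin n) ℂ V)
    (b bb : Fin n → V)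
    (hb : ∀ i, b i = B (Sum.inl i)) (hbb : ∀ i, bb i = B (Sum.inr i))
    (hbiso : ∀ i j, κ (b i) (b j) = 0)
    (hbbiso : ∀ i j, κ (bb i) (bb j) = 0)
    (hpair : ∀ i j, κ (b i) (bb j) = if i = j then (1 : ℂ) else 0)
    (u : CliffordAlgebra (LinearMap.BilinMap.toQuadraticMap κ))
    (hu : u = ((List.finRange n).map fun j =>
      ι (LinearMap.BilinMap.toQuadraticMap κ) (bb j)).prod)
    (τ τ' : CliffordAlgebra (LinearMap.BilinMap.toQuadraticMap κ))
    (hτ : τ = algebraMap ℂ _ (-((n : ℂ) * Complex.I) / 2) +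
      (Complex.I / 2) • ∑ j : Fin n,
        ι (LinearMap.BilinMap.toQuadraticMap κ) (b j) *
          ι (LinearMap.BilinMap.toQuadraticMap κ) (bb j))
    (hτ' : τ' = algebraMap ℂ _ (((n : ℂ) * Complex.I) / 2) -
      (Complex.I / 2) • ∑ j : Fin n,
        ι (LinearMap.BilinMap.toQuadraticMap κ) (bb j) *
          ι (LinearMap.BilinMap.toQuadraticMap κ) (b j))
    (U : Finset (Fin n) → Finset (Fin n) → CliffordAlgebra (LinearMap.BilinMap.toQuadraticMap κ))
    (hU : ∀ P Q : Finset (Fin n), U P Q =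
      ((P.sort (· ≤ ·)).map fun j =>
        ι (LinearMap.BilinMap.toQuadraticMap κ) (b j)).prod * u *
      ((Q.sort (· ≤ ·)).map fun j =>
        ι (LinearMap.BilinMap.toQuadraticMap κ) (b j)).prod) :
    ∀ p q : ℕ, p ≤ n → q ≤ n →
      (Submodule.span ℂ
          {w | ∃ P Q : Finset (Fin n), P.card = p ∧ Q.card = q ∧ w = U P Q} :
        Set (CliffordAlgebra (LinearMap.BilinMap.toQuadraticMap κ))) =
      {w | τ * w - w * τ' = (Complex.I * ((p : ℂ) + (q : ℂ) - (n : ℂ))) • w ∧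
           τ * w + w * τ' = (Complex.I * ((p : ℂ) - (q : ℂ))) • w} :=
  statement13_general V κ hsymm n B b bb hb hbb hbiso hbbiso hpair u hu τ τ' hτ hτ' U hU
end
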